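/- Let S be a t-conorm continuous in its first coordinate and X a set with at least two elements. Every fuzzy binary relation on X is strongly decomposable with respect to S and the drastic t-norm T_D if and only if every t ∈ (0,1) is a 1-divisor of S, i.e., for every t ∈ (0,1) there exists b ∈ (0,1) with S(t,b) = 1. -/

import Mathlib

structure Tconorm where
  S : unitInterval → unitInterval → unitInterval
  comm : ∀ a b, S a b = S b a
  assoc : ∀ a b c, S a (S b c) = S (S a b) c
  mono : ∀ a b c d, a ≤ c → b ≤ d → S a b ≤ S c d
  S_zero : ∀ a, S a 0 = a
  S_one : ∀ a, S a 1 = 1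

structure Tnorm where
  T : unitInterval → unitInterval → unitInterval
  comm : ∀ a b, T a b = T b a
  assoc : ∀ a b c, T a (T b c) = T (T a b) c
  mono : ∀ a b c d, a ≤ c → b ≤ d → T a b ≤ T c d
  T_one : ∀ a, T a 1 = a
  T_zero : ∀ a, T a 0 = 0

/-- A fuzzy binary relation `P` is asymmetric. -/
def FAsymm {X : Type*} (P : X → X → unitInterval) : Prop :=
  ∀ x y, 0 < P x y → P y x = 0

/-- A fuzzy binary relation `I` is symmetric. -/
def FSymm {X : Type*} (I : X → X → unitInterval) : Prop :=
  ∀ x y, I x y = I y x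

/-- `(P, I)` is a weak decomposition of `R` with respect to the t-conorm `S`. -/
def IsWeakDecomp {X : Type*} (S : Tconorm) (R P I : X → X → unitInterval) : Prop :=
  FAsymm P ∧ FSymm I ∧ (∀ x y, R x y = S.S (P x y) (I x y)) ∧
    ∀ x y, I x y = 1 → P x y = 0

/-- `(P, I)` is a strong decomposition of `R` with respect to `(T, S)`. -/
def IsStrongDecomp {X : Type*} (T : Tnorm) (S : Tconorm)
    (R P I : X → X → unitInterval) : Prop :=
  FAsymm P ∧ FSymm I ∧ (∀ x y, R x y = S.S (P x y) (I x y)) ∧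
    ∀ x y, T.T (P x y) (I x y) = 0

/-- The triplet `(R, P, I)` is a fuzzy preference (FP1–FP6). -/
def IsFuzzyPref {X : Type*} (R P I : X → X → unitInterval) : Prop :=
  (∀ x y, 0 < P x y → P y x = 0) ∧
  (∀ x y, I x y = I y x) ∧
  (∀ x y, P x y ≤ R x y) ∧
  (∀ x y, R y x < R x y ↔ 0 < P x y) ∧
  (∀ x y, P x y = 0 → R x y = I x y) ∧
  (∀ x y z w, I x y ≤ I z w → P x y ≤ P z w → R x y ≤ R z w)

open scoped Classical in
/-- The drastic t-norm. -/
noncomputable def TD : unitInterval → unitInterval → unitInterval :=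
  fun a b => if b = 1 then a else if a = 1 then b else 0

/-!
For `t < r`, continuity of `S` in its first argument (intermediate values when `r < 1`) and the
1-divisors (when `r = 1`) give an `a` with `S(a, t) = r` and `T_D(a, t) = 0`; then
`P(x, y) := a` for `(t, r) = (R(y, x), R(x, y))` whenever `R(y, x) < R(x, y)`, and `P(x, y) := 0`
otherwise, together with `I := min(R, Rᵀ)`, strongly decomposes `R`.
Conversely, a strong decomposition of a relation with `R(x, y) = 1` and `R(y, x) = t` forces
`I(x, y) = t`, and then `P(x, y)` is a partner `b ∈ (0, 1)` with `S(t, b) = 1`.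
-/

namespace Tconorm

variable (S : Tconorm)

lemma S_zero_left (a : unitInterval) : S.S 0 a = a := by
  rw [S.comm, S.S_zero]

lemma S_one_left (a : unitInterval) : S.S 1 a = 1 := by
  rw [S.comm, S.S_one]

lemma le_S_right (a b : unitInterval) : b ≤ S.S a b := by
  simpa only [S_zero_left] using S.mono 0 b a b unitInterval.nonneg' le_rfl

end Tconorm

lemma TD_zero_left (b : unitInterval) : TD 0 b = 0 := by
  simp [TD]

lemma TD_zero_right (a : unitInterval) : TD a 0 = 0 := by
  simp [TD]

lemma TD_one_left {b : unitInterval} (hb : b ≠ 1) : TD 1 b = b := by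
  simp [TD, hb]

lemma TD_eq_zero_of_ne_one {a b : unitInterval} (ha : a ≠ 1) (hb : b ≠ 1) : TD a b = 0 := by
  simp [TD, ha, hb]

lemma exists_strongDecomp_of_forall_lt {X : Type*} (S : Tconorm)
    (T : unitInterval → unitInterval → unitInterval) (hT : ∀ b, T 0 b = 0)
    (h : ∀ t r : unitInterval, t < r → ∃ a, S.S a t = r ∧ T a t = 0)
    (R : X → X → unitInterval) :
    ∃ P I : X → X → unitInterval,
      FAsymm P ∧ FSymm I ∧ (∀ x y, R x y = S.S (P x y) (I x y)) ∧
        ∀ x y, T (P x y) (I x y) = 0 := by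
  classical
  choose a haS haT using h
  refine ⟨fun x y => if hxy : R y x < R x y then a _ _ hxy else 0,
    fun x y => min (R x y) (R y x), ?_, fun x y => min_comm _ _, ?_, ?_⟩
  · intro x y hpos
    have hlt : R y x < R x y := by
      by_contra hn
      simp only [dif_neg hn, lt_self_iff_false] at hpos
    exact dif_neg (not_lt.2 hlt.le)
  · intro x y
    dsimp only
    split_ifs with hlt
    · rw [min_eq_right hlt.le, haS]
    · rw [min_eq_left (not_lt.1 hlt), S.S_zero_left]
  · intro x y
    dsimp only
    split_ifs with hlt
    · rw [min_eq_right hlt.le, haT]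
    · exact hT _

lemma exists_S_eq_TD_eq_zero (S : Tconorm) (hc : ∀ b, Continuous fun a => S.S a b)
    (H : ∀ t : unitInterval, 0 < t → t < 1 →
      ∃ b : unitInterval, 0 < b ∧ b < 1 ∧ S.S t b = 1)
    {t r : unitInterval} (htr : t < r) : ∃ a, S.S a t = r ∧ TD a t = 0 := by
  have ht1 : t ≠ 1 := (htr.trans_le unitInterval.le_one').ne
  rcases (unitInterval.le_one' : r ≤ 1).lt_or_eq with hr1 | rfl
  · obtain ⟨a, ha⟩ : ∃ a, S.S a t = r := by
      refine intermediate_value_univ 0 1 (hc t) ⟨?_, ?_⟩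
      · rw [S.S_zero_left]; exact htr.le
      · rw [S.S_one_left]; exact unitInterval.le_one'
    refine ⟨a, ha, TD_eq_zero_of_ne_one ?_ ht1⟩
    rintro rfl
    rw [S.S_one_left] at ha
    exact hr1.ne ha.symm
  · rcases eq_or_ne t 0 with rfl | ht0
    · exact ⟨1, S.S_zero 1, TD_zero_right 1⟩
    · obtain ⟨b, -, hb1, hb⟩ := H t (unitInterval.pos_iff_ne_zero.2 ht0) htr
      exact ⟨b, by rw [S.comm, hb], TD_eq_zero_of_ne_one hb1.ne ht1⟩

lemma one_divisor_of_strongDecomp_TD (S : Tconorm) {p q i t : unitInterval}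
    (hpq : 0 < p → q = 0) (hp : S.S p i = 1) (hq : S.S q i = t) (hTD : TD p i = 0)
    (ht0 : 0 < t) (ht1 : t < 1) : 0 < p ∧ p < 1 ∧ S.S t p = 1 := by
  have hi1 : i ≠ 1 := ((hq ▸ S.le_S_right q i).trans_lt ht1).ne
  have hp0 : 0 < p := by
    refine unitInterval.pos_iff_ne_zero.2 fun hp0 => hi1 ?_
    rwa [hp0, S.S_zero_left] at hp
  have hit : i = t := by rwa [hpq hp0, S.S_zero_left] at hq
  refine ⟨hp0, unitInterval.lt_one_iff_ne_one.2 fun hp1 => ht0.ne' ?_, ?_⟩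
  · rwa [hp1, TD_one_left hi1, hit] at hTD
  · rw [S.comm, ← hit, hp]

/-- With `S` continuous in the first coordinate, every fuzzy binary relation is
strongly decomposable w.r.t. `S` and the drastic t-norm iff every `t ∈ (0,1)` is a
`1`-divisor of `S`. -/
theorem strong_decomp_drastic_iff_one_divisors {X : Type*} (hX : ∃ x y : X, x ≠ y)
    (S : Tconorm) (hc : ∀ b, Continuous fun a => S.S a b) :
    (∀ R : X → X → unitInterval, ∃ P I : X → X → unitInterval,
        FAsymm P ∧ FSymm I ∧ (∀ x y, R x y = S.S (P x y) (I x y)) ∧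
          ∀ x y, TD (P x y) (I x y) = 0) ↔
    (∀ t : unitInterval, 0 < t → t < 1 → ∃ b : unitInterval, 0 < b ∧ b < 1 ∧ S.S t b = 1) := by
  constructor
  · intro h t ht0 ht1
    obtain ⟨x, y, hxy⟩ := hX
    classical
    obtain ⟨P, I, hP, hI, hR, hT⟩ := h fun a _ => if a = x then 1 else t
    refine ⟨P x y, one_divisor_of_strongDecomp_TD S (hP x y) ?_ ?_ (hT x y) ht0 ht1⟩
    · simpa using (hR x y).symm
    · simpa [hI y x, hxy.symm] using (hR y x).symm
  · intro H
    exact exists_strongDecomp_of_forall_lt S TD TD_zero_left fun _ _ =>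
      exists_S_eq_TD_eq_zero S hc H
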